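/- For all real numbers θ > 0, ρ > 0 and γ ≥ 0, one has ∫₀¹ θ · e^{γx} · (1-x)^{ρ} dx = (θ/(1+ρ)) · (1 + Σ_{m=1}^∞ γ^m / (2+ρ)_m). (This is the expected average number of pairwise gene-content differences, E[D^{(n)}], from Corollary 2.) -/

import Mathlib

open scoped BigOperators

/-!
Write `I(σ) = ∫₀¹ e^{γx} (1-x)^σ dx`. Integrating `(1-x)^σ` by parts gives the recursion
`(1+σ) I(σ) = 1 + γ I(σ+1)`. Iterating it `n` times expresses `(1+σ) I(σ)` as the `n`-th partial
sum of `Σ γ^k / (2+σ)_k` plus the remainder `(1+σ) γ^n / (1+σ)_n · I(σ+n)`, which tends to `0`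
because `|I| ≤ e^{|γ|}` and `(1+σ)_n ≥ n!`.
-/

/-- The real Pochhammer symbol `(a)_m = a (a+1) ⋯ (a+m-1)`. -/
noncomputable def pochR (a : ℝ) (m : ℕ) : ℝ := (ascPochhammer ℝ m).eval a

open Real Filter Topology

section Pochhammer

variable (a : ℝ) (m : ℕ)

lemma pochR_zero : pochR a 0 = 1 := by simp [pochR]

lemma pochR_succ_left : pochR a (m + 1) = a * pochR (a + 1) m := by
  simp [pochR, ascPochhammer_succ_left, Polynomial.eval_comp]

lemma pochR_succ_right : pochR a (m + 1) = pochR a m * (a + m) := by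
  simp [pochR, ascPochhammer_succ_right]

variable {a}

lemma pochR_pos (ha : 0 < a) : 0 < pochR a m := ascPochhammer_pos m a ha

lemma factorial_le_pochR (ha : 1 ≤ a) : (m.factorial : ℝ) ≤ pochR a m := by
  induction m with
  | zero => simp [pochR_zero]
  | succ n ih =>
    rw [pochR_succ_right, Nat.factorial_succ, Nat.cast_mul, mul_comm]
    push_cast
    exact mul_le_mul ih (by linarith) (by positivity) (pochR_pos n (by linarith)).le

lemma abs_pow_div_pochR_le (γ : ℝ) (ha : 1 ≤ a) :
    |γ ^ m / pochR a m| ≤ |γ| ^ m / m.factorial := by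
  rw [abs_div, abs_pow, abs_of_pos (pochR_pos m (by linarith))]
  gcongr
  exact factorial_le_pochR m ha

lemma summable_pow_div_pochR (γ : ℝ) (ha : 1 ≤ a) : Summable fun m ↦ γ ^ m / pochR a m :=
  (Real.summable_pow_div_factorial |γ|).of_norm_bounded (abs_pow_div_pochR_le · γ ha)

end Pochhammer

noncomputable def expWeightIntegral (γ σ : ℝ) : ℝ := ∫ x in (0 : ℝ)..1, exp (γ * x) * (1 - x) ^ σ

section ExpWeightIntegral

variable {γ σ : ℝ}

lemma continuousOn_exp_mul_one_sub_rpow (hσ : 0 ≤ σ) (s : Set ℝ) :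
    ContinuousOn (fun x ↦ exp (γ * x) * (1 - x) ^ σ) s :=
  (by fun_prop : Continuous fun x ↦ exp (γ * x)).continuousOn.mul
    ((continuous_const.sub continuous_id).continuousOn.rpow_const fun _ _ ↦ Or.inr hσ)

lemma hasDerivAt_exp_mul_one_sub_rpow (hσ : 0 ≤ σ) (x : ℝ) :
    HasDerivAt (fun y ↦ -(exp (γ * y) * (1 - y) ^ (σ + 1)) / (σ + 1))
      (exp (γ * x) * (1 - x) ^ σ - γ / (σ + 1) * (exp (γ * x) * (1 - x) ^ (σ + 1))) x := by
  have hexp : HasDerivAt (fun y ↦ exp (γ * y)) (exp (γ * x) * γ) x := by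
    simpa using ((hasDerivAt_id x).const_mul γ).exp
  have hpow : HasDerivAt (fun y ↦ (1 - y) ^ (σ + 1)) ((σ + 1) * (1 - x) ^ σ * -1) x := by
    refine (((hasDerivAt_id' x).const_sub 1).rpow_const (p := σ + 1)
      (Or.inr (by linarith))).congr_deriv ?_
    rw [add_sub_cancel_right]
    ring
  have hσ1 : σ + 1 ≠ 0 := by linarith
  refine (((hexp.mul hpow).neg).div_const (σ + 1)).congr_deriv ?_
  field_simp
  ring

lemma expWeightIntegral_eq (hσ : 0 ≤ σ) :
    expWeightIntegral γ σ = (1 + γ * expWeightIntegral γ (σ + 1)) / (σ + 1) := by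
  have hint : ∀ τ : ℝ, 0 ≤ τ → IntervalIntegrable (fun x ↦ exp (γ * x) * (1 - x) ^ τ)
      MeasureTheory.volume 0 1 := fun τ hτ ↦
    (continuousOn_exp_mul_one_sub_rpow (γ := γ) (σ := τ) hτ _).intervalIntegrable
  have hIBP := intervalIntegral.integral_eq_sub_of_hasDerivAt
    (fun x _ ↦ hasDerivAt_exp_mul_one_sub_rpow hσ x)
    ((hint σ hσ).sub ((hint (σ + 1) (by linarith)).const_mul _))
  rw [intervalIntegral.integral_sub (hint σ hσ) ((hint (σ + 1) (by linarith)).const_mul _),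
    intervalIntegral.integral_const_mul] at hIBP
  simp only [sub_self, sub_zero, mul_zero, exp_zero, one_rpow,
    zero_rpow (by linarith : σ + 1 ≠ 0)] at hIBP
  unfold expWeightIntegral
  field_simp at hIBP ⊢
  linarith

lemma abs_expWeightIntegral_le (hσ : 0 ≤ σ) : |expWeightIntegral γ σ| ≤ exp |γ| := by
  have h := intervalIntegral.norm_integral_le_of_norm_le_const
    (f := fun x ↦ exp (γ * x) * (1 - x) ^ σ) (C := exp |γ|) (a := 0) (b := 1) fun x hx ↦ by
    rw [Set.uIoc_of_le zero_le_one] at hx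
    rw [norm_mul, Real.norm_eq_abs, Real.norm_eq_abs, abs_of_pos (exp_pos _),
      abs_of_nonneg (rpow_nonneg (by linarith [hx.2]) _)]
    have hγx : γ * x ≤ |γ| :=
      calc γ * x ≤ |γ * x| := le_abs_self _
        _ = |γ| * x := by rw [abs_mul, abs_of_pos hx.1]
        _ ≤ |γ| := mul_le_of_le_one_right (abs_nonneg γ) hx.2
    simpa using mul_le_mul (exp_le_exp.mpr hγx)
      (rpow_le_one (by linarith [hx.2]) (by linarith [hx.1]) hσ)
      (rpow_nonneg (by linarith [hx.2]) _) (exp_pos _).le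
  simpa [expWeightIntegral] using h

lemma one_add_mul_expWeightIntegral_eq_sum_add (hσ : 0 ≤ σ) (n : ℕ) :
    (1 + σ) * expWeightIntegral γ σ = ∑ k ∈ Finset.range n, γ ^ k / pochR (2 + σ) k
      + (1 + σ) * (γ ^ n / pochR (1 + σ) n) * expWeightIntegral γ (σ + n) := by
  induction n with
  | zero => simp [pochR_zero]
  | succ n ih =>
    have hσn : 0 ≤ σ + n := by positivity
    have hpos₂ : 0 < pochR (2 + σ) n := pochR_pos n (by linarith)
    have hpos₁ : 0 < pochR (1 + σ) n := pochR_pos n (by linarith)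
    have hsucc : pochR (1 + σ) (n + 1) = (1 + σ) * pochR (2 + σ) n := by
      rw [pochR_succ_left]; ring_nf
    have hshift :
        (1 + σ) * (γ ^ n / pochR (1 + σ) n) = (σ + n + 1) * (γ ^ n / pochR (2 + σ) n) := by
      have := pochR_succ_right (1 + σ) n
      rw [hsucc] at this
      rw [mul_div_assoc', mul_div_assoc', div_eq_div_iff hpos₁.ne' hpos₂.ne']
      linear_combination γ ^ n * this
    rw [ih, expWeightIntegral_eq hσn, Finset.sum_range_succ, hsucc, hshift, Nat.cast_succ,
      ← add_assoc]
    field_simp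
    ring

lemma hasSum_pow_div_pochR (hσ : 0 ≤ σ) :
    HasSum (fun k ↦ γ ^ k / pochR (2 + σ) k) ((1 + σ) * expWeightIntegral γ σ) := by
  refine (summable_pow_div_pochR γ (by linarith)).hasSum_iff_tendsto_nat.mpr ?_
  have hbound : ∀ n : ℕ, ‖(1 + σ) * (γ ^ n / pochR (1 + σ) n) * expWeightIntegral γ (σ + n)‖
      ≤ (1 + σ) * (|γ| ^ n / n.factorial) * exp |γ| := fun n ↦ by
    rw [norm_mul, norm_mul, Real.norm_eq_abs, Real.norm_eq_abs, Real.norm_eq_abs,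
      abs_of_pos (by linarith : (0 : ℝ) < 1 + σ)]
    gcongr
    · exact abs_pow_div_pochR_le n γ (by linarith)
    · exact abs_expWeightIntegral_le (by positivity)
  have hremainder := squeeze_zero_norm hbound (by
    simpa using ((FloorSemiring.tendsto_pow_div_factorial_atTop |γ|).const_mul (1 + σ)).mul_const
      (exp |γ|))
  have hlimit := (tendsto_const_nhds (x := (1 + σ) * expWeightIntegral γ σ)).sub hremainder
  rw [sub_zero] at hlimit
  refine hlimit.congr fun n ↦ ?_
  rw [one_add_mul_expWeightIntegral_eq_sum_add hσ n, add_sub_cancel_right]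

end ExpWeightIntegral

theorem expected_pairwise_differences_general (θ ρ γ : ℝ) (hρ : 0 < ρ) :
    ∫ x in Set.Ioo (0 : ℝ) 1, θ * Real.exp (γ * x) * (1 - x) ^ ρ =
      θ / (1 + ρ) * (1 + ∑' m : ℕ, γ ^ (m + 1) / pochR (2 + ρ) (m + 1)) := by
  have hintegral : ∫ x in Set.Ioo (0 : ℝ) 1, θ * Real.exp (γ * x) * (1 - x) ^ ρ
      = θ * expWeightIntegral γ ρ := by
    simp_rw [expWeightIntegral, intervalIntegral.integral_of_le zero_le_one,
      MeasureTheory.integral_Ioc_eq_integral_Ioo, ← MeasureTheory.integral_const_mul, mul_assoc]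
  have hsum := hasSum_pow_div_pochR (γ := γ) hρ.le
  have hseries : 1 + ∑' m : ℕ, γ ^ (m + 1) / pochR (2 + ρ) (m + 1)
      = (1 + ρ) * expWeightIntegral γ ρ := by
    rw [← hsum.tsum_eq, hsum.summable.tsum_eq_zero_add, pow_zero, pochR_zero, div_one]
  rw [hintegral, hseries]
  field_simp

/-- Corollary 2, `E[D^{(n)}]`: for `θ > 0`, `ρ > 0`, `γ ≥ 0`,
`∫₀¹ θ e^{γx} (1-x)^{ρ} dx = (θ/(1+ρ)) (1 + Σ_{m≥1} γ^m/(2+ρ)_m)`. -/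
theorem expected_pairwise_differences (θ ρ γ : ℝ) (hθ : 0 < θ) (hρ : 0 < ρ) (hγ : 0 ≤ γ) :
    ∫ x in Set.Ioo (0 : ℝ) 1, θ * Real.exp (γ * x) * (1 - x) ^ ρ =
      θ / (1 + ρ) * (1 + ∑' m : ℕ, γ ^ (m + 1) / pochR (2 + ρ) (m + 1)) :=
  expected_pairwise_differences_general θ ρ γ hρ
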